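/- arXiv:2511.23223 — 3 statements merged into one kernel-verified Lean document; each statement's English description precedes it below -/
import Mathlib

section
/- Let t be a 2-adic integer. Then there exist x, y, z ∈ ℤ₂ with t = x² + y² + z² if and only if t is NOT of the form 4^δ·(8w + 7) for some non-negative integer δ and some w ∈ ℤ₂. -/
/-!
A sum of three squares is never `7` modulo `8`, and if it is divisible by `4` then all three
squares are even, so one can divide by `4` and induct on `δ`. Conversely, write `t = 4 ^ q * m`
with `4 ∤ m`. Modulo `8`, `m` is `1, 2, 3, 5` or `6` (the residues `0, 4` are excluded by
`4 ∤ m` and `7` by hypothesis), so `m ≡ a ^ 2 + b ^ 2 + 1` with `a, b ∈ {0, 1, 2}`. By Hensel's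
lemma a `2`-adic integer congruent to `1` modulo `8` is a square, which finishes the proof.
-/

namespace PadicInt

theorem pow_dvd_iff_toZModPow_eq_zero {p : ℕ} [Fact p.Prime] {n : ℕ} {x : ℤ_[p]} :
    (p : ℤ_[p]) ^ n ∣ x ↔ toZModPow n x = 0 := by
  rw [← Ideal.mem_span_singleton, ← ker_toZModPow, RingHom.mem_ker]

theorem four_dvd_iff_toZModPow_two_eq_zero {x : ℤ_[2]} : 4 ∣ x ↔ toZModPow 2 x = 0 := by
  rw [← pow_dvd_iff_toZModPow_eq_zero]; norm_num

theorem sum_three_sq_ne_eight_mul_add_seven (x y z w : ℤ_[2]) :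
    x ^ 2 + y ^ 2 + z ^ 2 ≠ 8 * w + 7 := by
  intro h
  have no_seven : ∀ a b c : ZMod (2 ^ 3), a ^ 2 + b ^ 2 + c ^ 2 ≠ 7 := by decide
  apply no_seven (toZModPow 3 x) (toZModPow 3 y) (toZModPow 3 z)
  have h8 := congrArg (toZModPow 3) h
  simp only [map_add, map_mul, map_pow, map_ofNat] at h8
  rwa [show (8 : ZMod (2 ^ 3)) = 0 from rfl, zero_mul, zero_add] at h8

theorem prime_two : Prime (2 : ℤ_[2]) := by exact_mod_cast prime_p (p := 2)

theorem not_isUnit_four : ¬ IsUnit (4 : ℤ_[2]) := by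
  rw [show (4 : ℤ_[2]) = 2 * 2 by norm_num, IsUnit.mul_iff]
  exact fun h => prime_two.not_isUnit h.1

theorem two_dvd_of_four_dvd_sq {x : ℤ_[2]} (h : 4 ∣ x ^ 2) : 2 ∣ x :=
  prime_two.dvd_of_dvd_pow (dvd_trans ⟨2, by norm_num⟩ h)

theorem two_dvd_of_four_dvd_sum_three_sq {x y z : ℤ_[2]} (h : 4 ∣ x ^ 2 + y ^ 2 + z ^ 2) :
    2 ∣ x ∧ 2 ∣ y ∧ 2 ∣ z := by
  have all_even : ∀ a b c : ZMod (2 ^ 2),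
      a ^ 2 + b ^ 2 + c ^ 2 = 0 → a ^ 2 = 0 ∧ b ^ 2 = 0 ∧ c ^ 2 = 0 := by decide
  simp only [four_dvd_iff_toZModPow_two_eq_zero, map_add, map_pow] at h
  obtain ⟨hx, hy, hz⟩ := all_even _ _ _ h
  simp only [← map_pow, ← four_dvd_iff_toZModPow_two_eq_zero] at hx hy hz
  exact ⟨two_dvd_of_four_dvd_sq hx, two_dvd_of_four_dvd_sq hy, two_dvd_of_four_dvd_sq hz⟩

theorem sum_three_sq_ne_four_pow_mul (δ : ℕ) (x y z w : ℤ_[2]) :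
    x ^ 2 + y ^ 2 + z ^ 2 ≠ 4 ^ δ * (8 * w + 7) := by
  induction δ generalizing x y z with
  | zero => simpa using sum_three_sq_ne_eight_mul_add_seven x y z w
  | succ δ ih =>
    intro h
    obtain ⟨⟨x, rfl⟩, ⟨y, rfl⟩, ⟨z, rfl⟩⟩ :=
      two_dvd_of_four_dvd_sum_three_sq (h ▸ dvd_mul_of_dvd_left (dvd_pow_self 4 δ.succ_ne_zero) _)
    refine ih x y z (mul_left_cancel₀ (by norm_num : (4 : ℤ_[2]) ≠ 0) ?_)
    linear_combination h

open Polynomial in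
theorem isSquare_of_eight_dvd_sub_one {u : ℤ_[2]} (h : 8 ∣ u - 1) : IsSquare u := by
  have hu : ‖u - 1‖ ≤ (2 : ℝ) ^ (-3 : ℤ) := by
    exact_mod_cast (norm_le_pow_iff_mem_span_pow (p := 2) (u - 1) 3).2
      (Ideal.mem_span_singleton.2 (by norm_num; exact h))
  have h2 : ‖(2 : ℤ_[2])‖ = 2⁻¹ := by exact_mod_cast norm_p (p := 2)
  have hensel :
      ‖aeval (1 : ℤ_[2]) (X ^ 2 - C u)‖ < ‖aeval (1 : ℤ_[2]) (derivative (X ^ 2 - C u))‖ ^ 2 := by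
    simp only [map_sub, map_pow, aeval_X, aeval_C, derivative_X_pow,
      derivative_C, map_mul, map_natCast]
    norm_num [h2, ← norm_neg (1 - u)]
    exact hu.trans_lt (by norm_num)
  obtain ⟨s, hs, -⟩ := hensels_lemma hensel
  exact ⟨s, by simpa [sub_eq_zero, sq, eq_comm] using hs⟩

theorem exists_sum_three_sq_of_eight_dvd_sub {m : ℤ_[2]} (a b : ℤ_[2])
    (h : 8 ∣ m - (a ^ 2 + b ^ 2 + 1)) : ∃ x y z : ℤ_[2], m = x ^ 2 + y ^ 2 + z ^ 2 := by
  obtain ⟨s, hs⟩ :=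
    isSquare_of_eight_dvd_sub_one (u := m - a ^ 2 - b ^ 2) (by convert h using 1; ring)
  exact ⟨s, a, b, by linear_combination hs⟩

theorem exists_sum_three_sq_of_not_four_dvd {m : ℤ_[2]} (h4 : ¬ 4 ∣ m)
    (h7 : ¬ ∃ w, m = 8 * w + 7) : ∃ x y z : ℤ_[2], m = x ^ 2 + y ^ 2 + z ^ 2 := by
  obtain ⟨r, hr8, hr⟩ : ∃ r : ℕ, r < 8 ∧ 8 ∣ m - r :=
    ⟨m.appr 3, appr_lt m 3, by
      simpa [show (2 : ℤ_[2]) ^ 3 = 8 by norm_num] using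
        Ideal.mem_span_singleton.1 (appr_spec 3 m)⟩
  interval_cases r
  · exact absurd (dvd_trans ⟨2, by norm_num⟩ (by simpa using hr : (8 : ℤ_[2]) ∣ m)) h4
  · exact exists_sum_three_sq_of_eight_dvd_sub 0 0 (by convert hr using 2; norm_num)
  · exact exists_sum_three_sq_of_eight_dvd_sub 1 0 (by convert hr using 2; norm_num)
  · exact exists_sum_three_sq_of_eight_dvd_sub 1 1 (by convert hr using 2; norm_num)
  · obtain ⟨k, hk⟩ := hr
    exact absurd ⟨2 * k + 1, by push_cast at hk; linear_combination hk⟩ h4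
  · exact exists_sum_three_sq_of_eight_dvd_sub 2 0 (by convert hr using 2; norm_num)
  · exact exists_sum_three_sq_of_eight_dvd_sub 2 1 (by convert hr using 2; norm_num)
  · obtain ⟨k, hk⟩ := hr
    exact absurd ⟨k, by push_cast at hk; linear_combination hk⟩ h7

end PadicInt

/-- Let `t` be a 2-adic integer. Then `t = x² + y² + z²` for some `x, y, z ∈ ℤ₂` if and
only if `t` is not of the form `4^δ·(8w + 7)` for a non-negative integer `δ` and
`w ∈ ℤ₂`. -/
theorem sum_three_squares_Z2_iff (t : ℤ_[2]) :
    (∃ x y z : ℤ_[2], t = x ^ 2 + y ^ 2 + z ^ 2) ↔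
      ¬ ∃ (δ : ℕ) (w : ℤ_[2]), t = 4 ^ δ * (8 * w + 7) := by
  refine ⟨?_, fun hnot => ?_⟩
  · rintro ⟨x, y, z, rfl⟩ ⟨δ, w, h⟩
    exact PadicInt.sum_three_sq_ne_four_pow_mul δ x y z w h
  rcases eq_or_ne t 0 with rfl | ht
  · exact ⟨0, 0, 0, by ring⟩
  obtain ⟨q, m, hm4, rfl⟩ := WfDvdMonoid.max_power_factor' ht PadicInt.not_isUnit_four
  obtain ⟨x, y, z, rfl⟩ :=
    PadicInt.exists_sum_three_sq_of_not_four_dvd hm4 fun ⟨w, hw⟩ => hnot ⟨q, w, by rw [hw]⟩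
  refine ⟨2 ^ q * x, 2 ^ q * y, 2 ^ q * z, ?_⟩
  rw [show (4 : ℤ_[2]) ^ q = (2 ^ q) ^ 2 by rw [← pow_mul, mul_comm, pow_mul]; norm_num]
  ring
end

section
/- Let p be a prime with p ≡ 1 (mod 4), let r be a positive integer, and let η be a unit of the ring ℤ_p of p-adic integers. Then {x² + pʳη·y² + pʳη·z² : x, y, z ∈ ℤ_p} = {x² + pʳ·y : x, y ∈ ℤ_p}. -/
/-!
It suffices that every `w ∈ ℤ_p` is a sum of two squares, since then `pʳ y = pʳ η (a² + b²)`
with `a² + b² = η⁻¹ y`. Because `p ≡ 1 (mod 4)`, `-1` is a square mod `p`, hence (Hensel) a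
square `i²` in `ℤ_p`, and `2` is a unit, so `w = ((w + 1)/2)² + (i (w - 1)/2)²`.
-/

open PadicInt Polynomial

theorem exists_sq_add_sq_eq_of_sq_eq_neg_one {R : Type*} [CommRing R] (h2 : IsUnit (2 : R))
    {i : R} (hi : i ^ 2 = -1) (w : R) : ∃ a b : R, a ^ 2 + b ^ 2 = w := by
  obtain ⟨u, hu⟩ := h2
  have hu' : (2 : R) * ↑u⁻¹ = 1 := by rw [← hu, Units.mul_inv]
  exact ⟨(w + 1) * ↑u⁻¹, i * ((w - 1) * ↑u⁻¹), by
    linear_combination (w * (2 * ↑u⁻¹ + 1)) * hu' + ((w - 1) * ↑u⁻¹) ^ 2 * hi⟩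

namespace PadicInt

variable {p : ℕ} [Fact p.Prime]

theorem isUnit_iff_toZMod_ne_zero {x : ℤ_[p]} : IsUnit x ↔ toZMod x ≠ 0 := by
  rw [Ne, ← RingHom.mem_ker, ker_toZMod, IsLocalRing.mem_maximalIdeal, mem_nonunits_iff, not_not]

theorem isUnit_two (hp : p ≠ 2) : IsUnit (2 : ℤ_[p]) :=
  isUnit_iff_toZMod_ne_zero.2 <| by
    rw [map_ofNat]
    exact Ring.two_ne_zero (by rwa [ZMod.ringChar_zmod_n])

theorem exists_sq_eq_of_toZMod_eq_sq (hp : p ≠ 2) {c : ℤ_[p]} {b : ZMod p} (hb : b ≠ 0)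
    (hc : toZMod c = b ^ 2) : ∃ z : ℤ_[p], z ^ 2 = c := by
  set a : ℤ_[p] := (b.val : ℤ_[p])
  have ha : toZMod a = b := by simp [a]
  have hderiv : ‖(X ^ 2 - C c).derivative.aeval a‖ = 1 := by
    rw [← isUnit_iff, derivative_sub, derivative_X_pow, derivative_C, sub_zero]
    simpa using (isUnit_two hp).mul (isUnit_iff_toZMod_ne_zero.2 (ha ▸ hb))
  have hval : ‖(X ^ 2 - C c).aeval a‖ < 1 := by
    rw [← not_isUnit_iff, isUnit_iff_toZMod_ne_zero, not_not]
    simp [ha, hc]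
  obtain ⟨z, hz, -⟩ := hensels_lemma (F := X ^ 2 - C c) (a := a) (by rwa [hderiv, one_pow])
  exact ⟨z, by simpa [sub_eq_zero] using hz⟩

theorem exists_sq_eq_neg_one (hp : p % 4 = 1) : ∃ i : ℤ_[p], i ^ 2 = -1 := by
  obtain ⟨b, hb⟩ := ZMod.exists_sq_eq_neg_one_iff.2 (by omega : p % 4 ≠ 3)
  refine exists_sq_eq_of_toZMod_eq_sq (by omega) (b := b) ?_ (by simp [hb, sq])
  rintro rfl
  simp at hb

end PadicInt

theorem values_ternary_form_Zp_general (p : ℕ) [Fact p.Prime] (hp : p % 4 = 1)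
    (r : ℕ) (η : ℤ_[p]ˣ) :
    {t : ℤ_[p] | ∃ x y z : ℤ_[p],
        t = x ^ 2 + (p : ℤ_[p]) ^ r * (η : ℤ_[p]) * y ^ 2 +
          (p : ℤ_[p]) ^ r * (η : ℤ_[p]) * z ^ 2} =
      {t : ℤ_[p] | ∃ x y : ℤ_[p], t = x ^ 2 + (p : ℤ_[p]) ^ r * y} := by
  obtain ⟨i, hi⟩ := exists_sq_eq_neg_one hp
  ext t
  constructor
  · rintro ⟨x, y, z, rfl⟩
    exact ⟨x, η * y ^ 2 + η * z ^ 2, by ring⟩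
  · rintro ⟨x, y, rfl⟩
    obtain ⟨a, b, hab⟩ :=
      exists_sq_add_sq_eq_of_sq_eq_neg_one (isUnit_two (by omega)) hi (↑η⁻¹ * y)
    exact ⟨x, a, b, by linear_combination (-((p : ℤ_[p]) ^ r * η)) * hab
      - (p : ℤ_[p]) ^ r * y * Units.mul_inv η⟩

/-- Let `p` be a prime with `p ≡ 1 (mod 4)`, `r` a positive integer, and `η` a unit of
`ℤ_p`. Then `{x² + pʳη·y² + pʳη·z² : x, y, z ∈ ℤ_p} = {x² + pʳ·y : x, y ∈ ℤ_p}`. -/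
theorem values_ternary_form_Zp (p : ℕ) [Fact p.Prime] (hp : p % 4 = 1)
    (r : ℕ) (hr : 0 < r) (η : ℤ_[p]ˣ) :
    {t : ℤ_[p] | ∃ x y z : ℤ_[p],
        t = x ^ 2 + (p : ℤ_[p]) ^ r * (η : ℤ_[p]) * y ^ 2 +
          (p : ℤ_[p]) ^ r * (η : ℤ_[p]) * z ^ 2} =
      {t : ℤ_[p] | ∃ x y : ℤ_[p], t = x ^ 2 + (p : ℤ_[p]) ^ r * y} :=
  values_ternary_form_Zp_general p hp r η
end

section
/- Let μ be a unit of the ring ℤ₂ of 2-adic integers with μ ≡ 1 (mod 4ℤ₂). Then {x² + 2μ·y² + 2μ·z² : x, y, z ∈ ℤ₂} = {x² + 2y² + 2z² : x, y, z ∈ ℤ₂}. -/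
/-!
Since `μ ≡ 1 (mod 4)`, `μ` is a sum of two squares in `ℤ₂`: by Hensel's lemma every
`w ≡ 1 (mod 8)` is a square, so either `μ` or `μ - 2²` is a square. The same holds for `μ⁻¹`.
Sums of two squares are closed under multiplication, so multiplying `y² + z²` by `μ` or by
`μ⁻¹` stays inside the values of `y² + z²`, which gives both inclusions.
-/

open Polynomial

namespace PadicInt

variable {p : ℕ} [Fact p.Prime]

theorem exists_sq_eq_of_norm_sub_one_lt {w : ℤ_[p]} (hw : ‖w - 1‖ < ‖(2 : ℤ_[p])‖ ^ 2) :
    ∃ r : ℤ_[p], r ^ 2 = w := by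
  have hnorm : ‖(X ^ 2 - C w : ℤ_[p][X]).aeval (1 : ℤ_[p])‖ <
      ‖(X ^ 2 - C w : ℤ_[p][X]).derivative.aeval (1 : ℤ_[p])‖ ^ 2 := by
    simpa [norm_sub_rev, one_add_one_eq_two] using hw
  obtain ⟨r, hr, -⟩ := hensels_lemma hnorm
  exact ⟨r, sub_eq_zero.mp (by simpa using hr)⟩

theorem exists_sq_eq_of_eight_dvd_sub_one {w : ℤ_[2]} (hw : 8 ∣ w - 1) :
    ∃ r : ℤ_[2], r ^ 2 = w := by
  apply exists_sq_eq_of_norm_sub_one_lt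
  have h8 : ‖w - 1‖ ≤ (2 : ℝ) ^ (-3 : ℤ) := by
    have := (norm_le_pow_iff_mem_span_pow (p := 2) (w - 1) 3).2
      (Ideal.mem_span_singleton.2 (by norm_num [hw]))
    exact_mod_cast this
  have h2 : ‖(2 : ℤ_[2])‖ = 2⁻¹ := by exact_mod_cast norm_p (p := 2)
  rw [h2]
  exact h8.trans_lt (by norm_num)

theorem two_dvd_or_two_dvd_sub_one (k : ℤ_[2]) : 2 ∣ k ∨ 2 ∣ k - 1 := by
  obtain ⟨n, hn, hk⟩ := exists_mem_range k
  rw [maximalIdeal_eq_span_p, Ideal.mem_span_singleton] at hk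
  interval_cases n
  · exact .inl (by simpa using hk)
  · exact .inr (by simpa using hk)

theorem exists_sq_add_sq_of_four_dvd_sub_one {u : ℤ_[2]} (hu : 4 ∣ u - 1) :
    ∃ a b : ℤ_[2], u = a ^ 2 + b ^ 2 := by
  obtain ⟨k, hk⟩ := hu
  rcases two_dvd_or_two_dvd_sub_one k with ⟨m, rfl⟩ | ⟨m, hm⟩
  · obtain ⟨r, hr⟩ := exists_sq_eq_of_eight_dvd_sub_one (w := u) ⟨m, by rw [hk]; ring⟩
    exact ⟨r, 0, by rw [hr]; ring⟩
  · obtain ⟨r, hr⟩ := exists_sq_eq_of_eight_dvd_sub_one (w := u - 2 ^ 2)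
      ⟨m, by linear_combination hk + 4 * hm⟩
    exact ⟨r, 2, by rw [hr]; ring⟩

end PadicInt

theorem Units.dvd_inv_sub_one_of_dvd_sub_one {R : Type*} [CommRing R] {n : R} (u : Rˣ)
    (h : n ∣ (u : R) - 1) : n ∣ (↑u⁻¹ : R) - 1 := by
  have : (↑u⁻¹ : R) - 1 = -(↑u⁻¹ * ((u : R) - 1)) := by rw [mul_sub, Units.inv_mul]; ring
  exact this ▸ dvd_neg.2 (h.mul_left _)

theorem setOf_sq_add_mul_sq_add_mul_sq_subset {R : Type*} [CommRing R] {c u a b : R}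
    (hu : u = a ^ 2 + b ^ 2) :
    {t : R | ∃ x y z : R, t = x ^ 2 + c * u * y ^ 2 + c * u * z ^ 2} ⊆
      {t : R | ∃ x y z : R, t = x ^ 2 + c * y ^ 2 + c * z ^ 2} := by
  rintro _ ⟨x, y, z, rfl⟩
  obtain ⟨r, s, h⟩ := sq_add_sq_mul hu (rfl : y ^ 2 + z ^ 2 = _)
  exact ⟨x, r, s, by linear_combination c * h⟩

/-- Let `μ` be a unit of `ℤ₂` with `μ ≡ 1 (mod 4ℤ₂)`. Then
`{x² + 2μ·y² + 2μ·z² : x, y, z ∈ ℤ₂} = {x² + 2y² + 2z² : x, y, z ∈ ℤ₂}`. -/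
theorem values_ternary_form_Z2 (μ : ℤ_[2]ˣ) (hμ : (4 : ℤ_[2]) ∣ ((μ : ℤ_[2]) - 1)) :
    {t : ℤ_[2] | ∃ x y z : ℤ_[2],
        t = x ^ 2 + 2 * (μ : ℤ_[2]) * y ^ 2 + 2 * (μ : ℤ_[2]) * z ^ 2} =
      {t : ℤ_[2] | ∃ x y z : ℤ_[2], t = x ^ 2 + 2 * y ^ 2 + 2 * z ^ 2} := by
  obtain ⟨a, b, hab⟩ := PadicInt.exists_sq_add_sq_of_four_dvd_sub_one hμ
  obtain ⟨a', b', hab'⟩ :=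
    PadicInt.exists_sq_add_sq_of_four_dvd_sub_one (μ.dvd_inv_sub_one_of_dvd_sub_one hμ)
  refine (setOf_sq_add_mul_sq_add_mul_sq_subset hab).antisymm ?_
  simpa only [Units.mul_inv_cancel_right] using
    setOf_sq_add_mul_sq_add_mul_sq_subset (c := 2 * (μ : ℤ_[2])) hab'
end
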